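/- For an interdependent n-person game under the learning dynamics, for every 0 < m < n and every two distinct states z^m_1, z^m_2 ∈ C^m, the resistance between the singleton recurrence classes {z^m_1} and {z^m_2} satisfies c ≤ r_{z^m_1 z^m_2} ≤ r̄_m, where r̄_m = m·c² + ((4 + m − m²)/2)·c − m(m+1)/2. -/

import Mathlib

open scoped Classical
open Filter Topology

namespace Paper

/-- Mood of an agent: content or discontent. -/
inductive Mood where
  | content : Mood
  | discontent : Mood
deriving DecidableEq

/-- The internal state of a single agent: a baseline action, a baseline utility and a mood. -/
structure AgentState (α : Type*) where
  act : α
  util : ℝ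
  mood : Mood

variable {n : ℕ} {A : Fin n → Type*} {W : Type*}

/-- Joint state of all agents. -/
abbrev JState (A : Fin n → Type*) := ∀ i, AgentState (A i)

/-- The baseline (joint) action profile of a joint state. -/
def prof (z : JState A) : ∀ j, A j := fun j => (z j).act

def allContent (z : JState A) : Prop := ∀ i, (z i).mood = Mood.content

def allDiscontent (z : JState A) : Prop := ∀ i, (z i).mood = Mood.discontent

variable [∀ i, Fintype (A i)] [Fintype W]

/-- The network welfare of an action profile under a disturbance. -/
def welfare (U : ∀ i : Fin n, (∀ j, A j) → W → ℝ) (a : ∀ j, A j) (w : W) : ℝ :=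
  ∑ i, U i a w

/-- ρ : the smallest real `r` such that `|U i a w₁ − U i a w₂| ≤ r` for all `i`, `a`, `w₁`, `w₂`. -/
noncomputable def rho (U : ∀ i : Fin n, (∀ j, A j) → W → ℝ) : ℝ :=
  sInf {r : ℝ | ∀ (i : Fin n) (a : ∀ j, A j) (w₁ w₂ : W), |U i a w₁ - U i a w₂| ≤ r}

/-- Interdependence of the n-person game subject to disturbances. -/
def Interdependent (U : ∀ i : Fin n, (∀ j, A j) → W → ℝ) : Prop :=
  ∀ (a : ∀ j, A j) (w : W) (J : Set (Fin n)), J.Nonempty → J ≠ Set.univ →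
    ∃ i ∉ J, ∃ a' : ∀ j, A j, (∀ j ∉ J, a' j = a j) ∧
      ∃ w' : W, |U i a' w' - U i a w| > rho U

/-- Probability that agent `i` in state `zi` plays action `ai`, with experimentation
rate `ε` and constant `c`: a content agent plays its baseline action with probability
`1 − ε^c` and each other action with probability `ε^c/(|A i| − 1)`; a discontent agent
plays each action with probability `1/|A i|`. -/
noncomputable def actProb (c ε : ℝ) {i : Fin n} (zi : AgentState (A i)) (ai : A i) : ℝ :=
  match zi.mood with
  | Mood.content =>
      if ai = zi.act then 1 - ε ^ c else ε ^ c / ((Fintype.card (A i) : ℝ) - 1)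
  | Mood.discontent => 1 / (Fintype.card (A i) : ℝ)

/-- Probability that agent `i` moves from state `zi` to state `zi'` after playing action `ai`
and receiving payoff `u`: a content agent that played its baseline action and received a
payoff within `ρ` of its baseline keeps its state; otherwise the state becomes
`[ai, u, content]` with probability `ε^(1−u)` and `[ai, u, discontent]` with
probability `1 − ε^(1−u)`. -/
noncomputable def updProb (ρ ε : ℝ) {i : Fin n} (zi zi' : AgentState (A i))
    (ai : A i) (u : ℝ) : ℝ :=
  if zi.mood = Mood.content ∧ ai = zi.act ∧ |u - zi.util| ≤ ρ then
    (if zi' = zi then 1 else 0)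
  else if zi' = ⟨ai, u, Mood.content⟩ then ε ^ (1 - u)
  else if zi' = ⟨ai, u, Mood.discontent⟩ then 1 - ε ^ (1 - u)
  else 0

/-- One-step transition probability `P^ε z z'` of the joint learning dynamics, averaging
over the joint action chosen and the i.i.d. disturbance with law `Prw`.
At `ε = 0` this is the unperturbed chain `P^0` (the entrywise limit as `ε → 0`). -/
noncomputable def P (U : ∀ i : Fin n, (∀ j, A j) → W → ℝ) (Prw : W → ℝ) (c : ℝ)
    (ε : ℝ) (z z' : JState A) : ℝ :=
  ∑ a : ∀ j, A j, ∑ w : W,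
    (∏ i, actProb c ε (z i) (a i)) * Prw w *
      (∏ i, updProb (rho U) ε (z i) (z' i) (a i) (U i a w))

variable (U : ∀ i : Fin n, (∀ j, A j) → W → ℝ) (Prw : W → ℝ) (c : ℝ)

/-- One-step transition with positive probability under the perturbed dynamics. -/
def stepPos (x y : JState A) : Prop := ∃ ε ∈ Set.Ioo (0:ℝ) 1, 0 < P U Prw c ε x y

/-- A joint state is valid if each baseline utility lies in the range of the
corresponding utility function. -/
def ValidState (z : JState A) : Prop := ∀ i, ∃ (a : ∀ j, A j) (w : W), U i a w = (z i).util

/-- The joint state space `Z`: joint states reachable with positive probability (in some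
positive number of steps) from a joint state in which all agents are discontent. -/
def SSpace : Set (JState A) :=
  {z | ∃ z₀ : JState A, ValidState U z₀ ∧ allDiscontent z₀ ∧
        Relation.TransGen (stepPos U Prw c) z₀ z}

/-- The set `D` of all-discontent joint states in `Z`. -/
def Dset : Set (JState A) := {z | z ∈ SSpace U Prw c ∧ allDiscontent z}

/-- The set `B i`: states whose baseline utility for agent `i` is aligned with the baseline
action profile for some disturbance and within `ρ` of it for every disturbance. -/
def Bset (i : Fin n) : Set (JState A) :=
  {z | z ∈ SSpace U Prw c ∧ (∃ w : W, (z i).util = U i (prof z) w) ∧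
       ∀ w' : W, |(z i).util - U i (prof z) w'| ≤ rho U}

/-- The content classes `C^m`. -/
def Cm : ℕ → Set (JState A)
  | 0 => {z | z ∈ SSpace U Prw c ∧ allContent z ∧ ∀ i, z ∈ Bset U Prw c i}
  | (m+1) => {z | z ∈ SSpace U Prw c ∧ allContent z ∧
      ∃ J : Fin (m+2) → Finset (Fin n),
        (∀ k, (J k).Nonempty) ∧
        (∀ k l, k ≠ l → Disjoint (J k) (J l)) ∧
        (Finset.univ.biUnion J = Finset.univ) ∧
        (∀ j ∈ J (Fin.last (m+1)), z ∈ Bset U Prw c j) ∧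
        ∃ z' ∈ Cm m, ∀ j ∉ J (Fin.last (m+1)),
          z j = z' j ∧ ∀ w' : W, |(z' j).util - U j (prof z) w'| ≤ rho U}

/-- One-step transition with positive probability under the unperturbed chain `P^0`. -/
def step0 (x y : JState A) : Prop := 0 < P U Prw c 0 x y

/-- Reachability (in zero or more steps) under the unperturbed chain `P^0`. -/
def Reach0 : JState A → JState A → Prop := Relation.ReflTransGen (step0 U Prw c)

/-- A state is recurrent for `P^0` if every state reachable from it can reach it back. -/
def Recurrent0 (x : JState A) : Prop := ∀ y, Reach0 U Prw c x y → Reach0 U Prw c y x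

/-- Recurrence classes of the unperturbed chain `P^0` on `Z`. -/
def RecClass (Cl : Set (JState A)) : Prop :=
  ∃ x ∈ SSpace U Prw c, Recurrent0 U Prw c x ∧
    Cl = {y | y ∈ SSpace U Prw c ∧ Reach0 U Prw c x y}

/- Generic Markov chain notions. -/

/-- `k`-step reachability (through positive-probability transitions) for a kernel `Q`. -/
def MReachN {X : Type*} (Q : X → X → ℝ) : ℕ → X → X → Prop
  | 0 => fun x y => x = y
  | (k+1) => fun x y => ∃ z, 0 < Q x z ∧ MReachN Q k z y

/-- Irreducibility of a kernel on a set of states. -/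
def MIrreducibleOn {X : Type*} (Q : X → X → ℝ) (S : Set X) : Prop :=
  ∀ x ∈ S, ∀ y ∈ S, ∃ k, 0 < k ∧ MReachN Q k x y

/-- Aperiodicity of a kernel on a set of states: the return times to each state
have greatest common divisor 1. -/
def MAperiodicOn {X : Type*} (Q : X → X → ℝ) (S : Set X) : Prop :=
  ∀ x ∈ S, ∀ d : ℕ, (∀ k, 0 < k → MReachN Q k x x → d ∣ k) → d = 1

/-- Reachability for a kernel `Q`. -/
def MReach {X : Type*} (Q : X → X → ℝ) : X → X → Prop :=
  Relation.ReflTransGen (fun x y => 0 < Q x y)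

/-- Recurrent state of a kernel. -/
def MRecurrent {X : Type*} (Q : X → X → ℝ) (x : X) : Prop :=
  ∀ y, MReach Q x y → MReach Q y x

/-- Recurrence class of a kernel. -/
def MRecClass {X : Type*} (Q : X → X → ℝ) (Cl : Set X) : Prop :=
  ∃ x, MRecurrent Q x ∧ Cl = {y | MReach Q x y}

/-- Stationary distribution of a kernel on a finite type. -/
def MStationary {X : Type*} [Fintype X] (Q : X → X → ℝ) (μ : X → ℝ) : Prop :=
  (∀ x, 0 ≤ μ x) ∧ (∑ x, μ x) = 1 ∧ ∀ y, (∑ x, μ x * Q x y) = μ y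

/-- Stationary distribution of a kernel supported on a set `S`. -/
def IsStationaryOn {X : Type*} (Q : X → X → ℝ) (S : Set X) (μ : X → ℝ) : Prop :=
  (∀ x, 0 ≤ μ x) ∧ (∀ x ∉ S, μ x = 0) ∧ (∑ᶠ x ∈ S, μ x) = 1 ∧
    ∀ y ∈ S, (∑ᶠ x ∈ S, μ x * Q x y) = μ y

/-- `r` is the resistance of the transition `x → y` for the family of kernels `Pf ε`:
`0 < lim_{ε→0⁺} ε^{−r} Pf ε x y < ∞`. -/
def FamTransRes {X : Type*} (Pf : ℝ → X → X → ℝ) (x y : X) (r : ℝ) : Prop :=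
  ∃ L : ℝ, 0 < L ∧
    Tendsto (fun ε : ℝ => Pf ε x y / ε ^ r) (𝓝[>] (0:ℝ)) (𝓝 L)

/-- `PathRes R x y r`: there is a path (of one or more transitions) from `x` to `y`
whose transitions have resistances (in the sense of `R`) summing to `r`. -/
inductive PathRes {X : Type*} (R : X → X → ℝ → Prop) : X → X → ℝ → Prop
  | single {x y : X} {r : ℝ} : R x y r → PathRes R x y r
  | cons {x y z : X} {r s : ℝ} : R x y r → PathRes R y z s → PathRes R x z (r + s)

/-- `ClassResIs R S T r` : `r` is the minimum path resistance over paths from a state of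
`S` to a state of `T`. -/
def ClassResIs {X : Type*} (R : X → X → ℝ → Prop) (S T : Set X) (r : ℝ) : Prop :=
  (∃ x ∈ S, ∃ y ∈ T, PathRes R x y r) ∧
    ∀ x ∈ S, ∀ y ∈ T, ∀ r', PathRes R x y r' → r ≤ r'

/-- Resistance of a transition for the learning dynamics. -/
def TransRes (x y : JState A) (r : ℝ) : Prop := FamTransRes (P U Prw c) x y r

/- Trees over recurrence classes and stochastic potential. -/

/-- An `ℓ`-tree over the collection `RC` of recurrence classes, rooted at `root`, encoded by a
parent map: every non-root class has exactly one outgoing edge (to its parent), and following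
parents from any class leads to the root. -/
def IsLTree {X : Type*} (RC : Set (Set X)) (root : Set X) (par : Set X → Set X) : Prop :=
  root ∈ RC ∧ par root = root ∧ (∀ Cl ∈ RC, par Cl ∈ RC) ∧
    ∀ Cl ∈ RC, ∃ k : ℕ, par^[k] Cl = root

/-- Total resistance of a tree: sum over non-root classes of the resistance of the
edge to the parent, where `rfun C₁ C₂` is the resistance between classes `C₁` and `C₂`. -/
noncomputable def treeRes {X : Type*} (RC : Set (Set X)) (rfun : Set X → Set X → ℝ)
    (root : Set X) (par : Set X → Set X) : ℝ :=
  ∑ᶠ Cl ∈ {Cl | Cl ∈ RC ∧ Cl ≠ root}, rfun Cl (par Cl)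

/-- Stochastic potential of the recurrence class `root`: minimum total resistance over
trees rooted at `root`. -/
noncomputable def stochPot {X : Type*} (RC : Set (Set X)) (rfun : Set X → Set X → ℝ)
    (root : Set X) : ℝ :=
  sInf {s | ∃ par, IsLTree RC root par ∧ s = treeRes RC rfun root par}

/- Trees over recurrence classes indexed by `Fin L`. -/

/-- An `ℓ`-tree on vertex set `Fin L` rooted at `root`, encoded by a parent map. -/
def IsLTreeFin {L : ℕ} (root : Fin L) (par : Fin L → Fin L) : Prop :=
  par root = root ∧ ∀ v, ∃ k : ℕ, par^[k] v = root

/-- Total resistance of a tree on `Fin L`. -/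
noncomputable def treeResFin {L : ℕ} (r : Fin L → Fin L → ℝ) (root : Fin L)
    (par : Fin L → Fin L) : ℝ :=
  ∑ v ∈ Finset.univ.filter (fun v => v ≠ root), r v (par v)

/-- Stochastic potential of the recurrence class indexed by `root`. -/
noncomputable def stochPotFin {L : ℕ} (r : Fin L → Fin L → ℝ) (root : Fin L) : ℝ :=
  sInf {s | ∃ par, IsLTreeFin root par ∧ s = treeResFin r root par}

end Paper

/-!
Lower bound. A state of `C^m` is content and every baseline utility lies within `ρ` of what the
baseline profile yields under any disturbance, so when the baseline profile is played nobody
changes state. Leaving such a state therefore needs an experiment, a factor `ε^c`, so every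
transition out of `z^m₁` has resistance at least `c`; all other resistances are nonnegative.

Upper bound. From `z^m₁` all `n` agents experiment at once and become discontent (resistance at
most `n c`). Then `z^m₂` is rebuilt along the recursive definition of `C^m`: while the
discontent agents play the target profile, the agents settle one at a time, each acceptance
costing `1 - u ≤ 1`. This path has resistance at most `n c + n ≤ r̄_m`, as `m + 1 ≤ n < c`.

The resistances along this path exist because each `P^ε_xy` is a finite sum of products of
nonnegative constants, `ε^γ` and `1 - ε^γ`, and such functions of `ε` either vanish near `0⁺`
or are asymptotic to `L ε^r` with `L > 0`.
-/

namespace Paper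

open Asymptotics

section PowerOrder

-- `TransRes U Prw c x y r` unfolds to `HasPowerOrder (fun ε => P U Prw c ε x y) r`, and
-- `IsRegular` is the dichotomy defining a regular perturbation.
def HasPowerOrder (f : ℝ → ℝ) (r : ℝ) : Prop :=
  ∃ L, 0 < L ∧ Tendsto (fun ε => f ε / ε ^ r) (𝓝[>] 0) (𝓝 L)

def IsRegular (f : ℝ → ℝ) : Prop :=
  f =ᶠ[𝓝[>] 0] 0 ∨ ∃ r, HasPowerOrder f r

variable {f g : ℝ → ℝ} {r s : ℝ}

lemma tendsto_rpow_nhdsGT_zero {γ : ℝ} (hγ : 0 < γ) :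
    Tendsto (fun ε : ℝ => ε ^ γ) (𝓝[>] 0) (𝓝 0) := by
  simpa [Real.zero_rpow hγ.ne'] using
    (Real.continuousAt_rpow_const 0 γ (Or.inr hγ.le)).tendsto.mono_left nhdsWithin_le_nhds

lemma le_of_rpow_isBigO_rpow {a b : ℝ}
    (h : (fun ε : ℝ => ε ^ a) =O[𝓝[>] 0] fun ε => ε ^ b) : b ≤ a := by
  by_contra! hab
  obtain ⟨C, hC⟩ := h.bound
  have hlarge := (tendsto_rpow_neg_nhdsGT_zero (sub_neg.2 hab)).eventually_gt_atTop C
  obtain ⟨ε, hCε, hε, hε0⟩ := (hC.and (hlarge.and self_mem_nhdsWithin)).exists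
  have hεb : 0 < ε ^ b := Real.rpow_pos_of_pos hε0 b
  rw [Real.rpow_sub hε0, lt_div_iff₀ hεb] at hε
  rw [Real.norm_of_nonneg (Real.rpow_nonneg hε0.le a),
    Real.norm_of_nonneg hεb.le] at hCε
  linarith

lemma hasPowerOrder_const {k : ℝ} (hk : 0 < k) : HasPowerOrder (fun _ => k) 0 :=
  ⟨k, hk, by simp⟩

lemma hasPowerOrder_rpow (γ : ℝ) : HasPowerOrder (fun ε => ε ^ γ) γ := by
  refine ⟨1, one_pos, tendsto_const_nhds.congr' ?_⟩
  filter_upwards [self_mem_nhdsWithin] with ε hε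
  exact (div_self (Real.rpow_pos_of_pos hε γ).ne').symm

lemma hasPowerOrder_one_sub_rpow {γ : ℝ} (hγ : 0 < γ) :
    HasPowerOrder (fun ε => 1 - ε ^ γ) 0 :=
  ⟨1, one_pos, by simpa using (tendsto_rpow_nhdsGT_zero hγ).const_sub 1⟩

lemma HasPowerOrder.congr (hf : HasPowerOrder f r) (hfg : f =ᶠ[𝓝[>] 0] g) :
    HasPowerOrder g r := by
  obtain ⟨L, hL, hfL⟩ := hf
  exact ⟨L, hL, hfL.congr' (by filter_upwards [hfg] with ε h; rw [h])⟩

lemma HasPowerOrder.mul (hf : HasPowerOrder f r) (hg : HasPowerOrder g s) :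
    HasPowerOrder (f * g) (r + s) := by
  obtain ⟨L, hL, hfL⟩ := hf
  obtain ⟨M, hM, hgM⟩ := hg
  refine ⟨L * M, mul_pos hL hM, (hfL.mul hgM).congr' ?_⟩
  filter_upwards [self_mem_nhdsWithin] with ε hε
  rw [Pi.mul_apply, Real.rpow_add hε, mul_div_mul_comm]

lemma HasPowerOrder.tendsto_div_rpow_of_lt (hg : HasPowerOrder g s) (hrs : r < s) :
    Tendsto (fun ε => g ε / ε ^ r) (𝓝[>] 0) (𝓝 0) := by
  obtain ⟨M, -, hgM⟩ := hg
  have h := hgM.mul (tendsto_rpow_nhdsGT_zero (sub_pos.2 hrs))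
  rw [mul_zero] at h
  refine h.congr' ?_
  filter_upwards [self_mem_nhdsWithin] with ε hε
  rw [Real.rpow_sub hε, div_mul_div_cancel₀ (Real.rpow_pos_of_pos hε s).ne']

lemma HasPowerOrder.add (hf : HasPowerOrder f r) (hg : HasPowerOrder g s) :
    HasPowerOrder (f + g) (min r s) := by
  wlog hrs : r ≤ s generalizing f g r s
  · rw [add_comm, min_comm]
    exact this hg hf (le_of_not_ge hrs)
  obtain ⟨L, hL, hfL⟩ := hf
  rw [min_eq_left hrs]
  rcases hrs.lt_or_eq with hrs | rfl
  · exact ⟨L, hL, by simpa [add_div] using hfL.add (hg.tendsto_div_rpow_of_lt hrs)⟩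
  · obtain ⟨M, hM, hgM⟩ := hg
    exact ⟨L + M, add_pos hL hM, by simpa [add_div] using hfL.add hgM⟩

lemma HasPowerOrder.isTheta (hf : HasPowerOrder f r) : f =Θ[𝓝[>] 0] fun ε => ε ^ r := by
  obtain ⟨L, hL, hfL⟩ := hf
  have hequiv : f ~[𝓝[>] 0] fun ε => L * ε ^ r := by
    refine isEquivalent_of_tendsto_one ?_
    simpa [Pi.div_def, div_div, mul_comm, div_self hL.ne'] using hfL.div_const L
  exact hequiv.isTheta.trans ((isTheta_const_mul_left hL.ne').2 (isTheta_refl _ _))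

lemma HasPowerOrder.le_of_isBigO (hf : HasPowerOrder f r) {a : ℝ}
    (h : f =O[𝓝[>] 0] fun ε => ε ^ a) : a ≤ r :=
  le_of_rpow_isBigO_rpow (hf.isTheta.symm.isBigO.trans h)

lemma HasPowerOrder.le_of_rpow_isBigO (hf : HasPowerOrder f r) {b : ℝ}
    (h : (fun ε => ε ^ b) =O[𝓝[>] 0] f) : r ≤ b :=
  le_of_rpow_isBigO_rpow (h.trans hf.isTheta.isBigO)

lemma IsRegular.const {k : ℝ} (hk : 0 ≤ k) : IsRegular fun _ => k := by
  rcases hk.eq_or_lt with rfl | hk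
  · exact Or.inl EventuallyEq.rfl
  · exact Or.inr ⟨0, hasPowerOrder_const hk⟩

lemma IsRegular.rpow (γ : ℝ) : IsRegular fun ε => ε ^ γ :=
  Or.inr ⟨γ, hasPowerOrder_rpow γ⟩

lemma IsRegular.one_sub_rpow {γ : ℝ} (hγ : 0 < γ) : IsRegular fun ε => 1 - ε ^ γ :=
  Or.inr ⟨0, hasPowerOrder_one_sub_rpow hγ⟩

lemma IsRegular.mul (hf : IsRegular f) (hg : IsRegular g) : IsRegular (f * g) := by
  rcases hf with hf | ⟨r, hf⟩
  · exact Or.inl (by filter_upwards [hf] with ε h; simp [h])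
  rcases hg with hg | ⟨s, hg⟩
  · exact Or.inl (by filter_upwards [hg] with ε h; simp [h])
  exact Or.inr ⟨r + s, hf.mul hg⟩

lemma IsRegular.add (hf : IsRegular f) (hg : IsRegular g) : IsRegular (f + g) := by
  rcases hf with hf | ⟨r, hf⟩
  · have hfg : g =ᶠ[𝓝[>] 0] f + g := by filter_upwards [hf] with ε h; simp [h]
    rcases hg with hg | ⟨s, hg⟩
    exacts [Or.inl (hfg.symm.trans hg), Or.inr ⟨s, hg.congr hfg⟩]
  rcases hg with hg | ⟨s, hg⟩
  · have hfg : f =ᶠ[𝓝[>] 0] f + g := by filter_upwards [hg] with ε h; simp [h]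
    exact Or.inr ⟨r, hf.congr hfg⟩
  exact Or.inr ⟨min r s, hf.add hg⟩

lemma IsRegular.sum {ι : Type*} (t : Finset ι) {f : ι → ℝ → ℝ}
    (h : ∀ i ∈ t, IsRegular (f i)) : IsRegular (∑ i ∈ t, f i) :=
  Finset.sum_induction f IsRegular (fun _ _ => IsRegular.add) (Or.inl EventuallyEq.rfl) h

lemma IsRegular.prod {ι : Type*} (t : Finset ι) {f : ι → ℝ → ℝ}
    (h : ∀ i ∈ t, IsRegular (f i)) : IsRegular (∏ i ∈ t, f i) :=
  Finset.prod_induction f IsRegular (fun _ _ => IsRegular.mul) (IsRegular.const zero_le_one) h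

lemma IsRegular.exists_hasPowerOrder_le (hf : IsRegular f) {b : ℝ}
    (h : (fun ε => ε ^ b) =O[𝓝[>] 0] f) : ∃ r ≤ b, HasPowerOrder f r := by
  rcases hf with hf | ⟨r, hr⟩
  · obtain ⟨ε, hε, hε0⟩ :=
      ((isBigO_zero_right_iff.1 (h.trans_eventuallyEq hf)).and self_mem_nhdsWithin).exists
    exact absurd hε (Real.rpow_pos_of_pos hε0 b).ne'
  · exact ⟨r, hr.le_of_rpow_isBigO h, hr⟩

lemma one_isBigO_one_sub_rpow {γ : ℝ} (hγ : 0 < γ) :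
    (fun _ => (1:ℝ)) =O[𝓝[>] 0] fun ε : ℝ => 1 - ε ^ γ := by
  refine ((isEquivalent_const_iff_tendsto one_ne_zero).2 ?_).isTheta_symm.isBigO
  simpa using (tendsto_rpow_nhdsGT_zero hγ).const_sub 1

end PowerOrder

section Paths

variable {X : Type*} {R : X → X → ℝ → Prop}

lemma PathRes.snoc {x y z : X} {r s : ℝ} (h : PathRes R x y r) (hyz : R y z s) :
    PathRes R x z (r + s) := by
  induction h with
  | single hxy => exact .cons hxy (.single hyz)
  | cons hxy _ ih => rw [add_assoc]; exact .cons hxy (ih hyz)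

lemma PathRes.nonneg (hR : ∀ x y r, R x y r → 0 ≤ r) {x y : X} {r : ℝ}
    (h : PathRes R x y r) : 0 ≤ r := by
  induction h with
  | single hxy => exact hR _ _ _ hxy
  | cons hxy _ ih => exact add_nonneg (hR _ _ _ hxy) ih

lemma PathRes.le_of_forall_exit_le (hR : ∀ x y r, R x y r → 0 ≤ r) {x₀ : X} {c : ℝ}
    (hexit : ∀ y r, R x₀ y r → y ≠ x₀ → c ≤ r) {x y : X} {r : ℝ} (h : PathRes R x y r)
    (hx : x = x₀) (hy : y ≠ x₀) : c ≤ r := by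
  induction h with
  | single hxy => subst hx; exact hexit _ _ hxy hy
  | @cons x y z r s hxy hyz ih =>
    subst hx
    by_cases hy' : y = x
    · linarith [ih hy' hy, hR _ _ _ hxy]
    · linarith [hexit _ _ hxy hy', hyz.nonneg hR]

end Paths

section LearningDynamics

variable {n : ℕ} {A : Fin n → Type*} {W : Type*}

-- Agent `i` keeps its state in `x` whenever the baseline profile of `x` is played.
def Settled (U : Fin n → (∀ j, A j) → W → ℝ) (x : JState A) (i : Fin n) : Prop :=
  (x i).mood = Mood.content ∧ ∀ w, |U i (prof x) w - (x i).util| ≤ rho U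

def IsPartial (z : JState A) (T : Finset (Fin n)) (x : JState A) : Prop :=
  (∀ i ∈ T, x i = z i) ∧ ∀ i ∉ T, (x i).mood = Mood.discontent

lemma IsPartial.eq_of_univ {z x : JState A} (h : IsPartial z Finset.univ x) : x = z :=
  funext fun i => h.1 i (Finset.mem_univ i)

variable {U : Fin n → (∀ j, A j) → W → ℝ}

lemma abs_sub_le_rho (hU : ∀ i a w, U i a w ∈ Set.Ico (0:ℝ) 1) (i : Fin n) (a : ∀ j, A j)
    (w₁ w₂ : W) :
    |U i a w₁ - U i a w₂| ≤ rho U := by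
  refine le_csInf ⟨1, fun i a w₁ w₂ => ?_⟩ fun r hr => hr i a w₁ w₂
  have h₁ := hU i a w₁
  have h₂ := hU i a w₂
  rw [abs_le]
  constructor <;> linarith [h₁.1, h₁.2, h₂.1, h₂.2]

lemma Interdependent.exists_ne (hInter : Interdependent U)
    (hU : ∀ i a w, U i a w ∈ Set.Ico (0:ℝ) 1) (hn : 1 < n) (a : ∀ j, A j) (w : W)
    (j : Fin n) : ∃ b, b ≠ a j := by
  have : Nontrivial (Fin n) := Fin.nontrivial_iff_two_le.2 hn
  obtain ⟨j', hj'⟩ := _root_.exists_ne j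
  obtain ⟨i, -, a', ha', w', hw'⟩ :=
    hInter a w {j} (Set.singleton_nonempty j) fun h => hj' (h ▸ Set.mem_univ j' :)
  refine ⟨a' j, fun h => ?_⟩
  have ha : a' = a := funext fun k => by
    by_cases hk : k = j
    · subst hk; exact h
    · exact ha' k hk
  rw [ha] at hw'
  exact (abs_sub_le_rho hU i a w' w).not_gt hw'

lemma settled_of_eq_of_abs_sub_le {z z' : JState A} (hz : allContent z) {i : Fin n}
    (h : z i = z' i ∧ ∀ w, |(z' i).util - U i (prof z) w| ≤ rho U) : Settled U z i :=
  ⟨hz i, fun w => by rw [h.1, abs_sub_comm]; exact h.2 w⟩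

lemma IsPartial.keep_iff_mem {z x : JState A} {G : Finset (Fin n)} (hx : IsPartial z G x)
    (hG : ∀ i ∈ G, Settled U z i) (w : W) (i : Fin n) :
    ((x i).mood = Mood.content ∧ prof z i = (x i).act ∧
      |U i (prof z) w - (x i).util| ≤ rho U) ↔ i ∈ G := by
  refine ⟨fun h => by_contra fun hi => ?_, fun hi => ?_⟩
  · simp [hx.2 i hi] at h
  · rw [hx.1 i hi]
    exact ⟨(hG i hi).1, rfl, (hG i hi).2 w⟩

variable {c ε : ℝ} {i : Fin n}

lemma updProb_mem_Icc {ρ u : ℝ} (hε : ε ∈ Set.Icc (0:ℝ) 1) (hu : u ≤ 1)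
    (zi zi' : AgentState (A i)) (ai : A i) : updProb ρ ε zi zi' ai u ∈ Set.Icc (0:ℝ) 1 := by
  have h₀ := Real.rpow_nonneg hε.1 (1 - u)
  have h₁ := Real.rpow_le_one hε.1 hε.2 (sub_nonneg.2 hu)
  unfold updProb
  split_ifs <;> constructor <;> linarith

lemma isRegular_updProb {ρ u : ℝ} (hu : u < 1) (zi zi' : AgentState (A i)) (ai : A i) :
    IsRegular fun ε => updProb ρ ε zi zi' ai u := by
  unfold updProb
  split_ifs
  exacts [.const zero_le_one, .const le_rfl, .rpow _, .one_sub_rpow (sub_pos.2 hu),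
    .const le_rfl]

variable [∀ i, Fintype (A i)]

lemma actProb_mem_Icc (hc : 0 ≤ c) (hε : ε ∈ Set.Icc (0:ℝ) 1) (zi : AgentState (A i))
    (ai : A i) : actProb c ε zi ai ∈ Set.Icc (0:ℝ) 1 := by
  have hcard : (1:ℝ) ≤ Fintype.card (A i) := by
    exact_mod_cast Fintype.card_pos_iff.2 ⟨ai⟩
  have h₀ := Real.rpow_nonneg hε.1 c
  have h₁ := Real.rpow_le_one hε.1 hε.2 hc
  rcases zi with ⟨b, u, _ | _⟩ <;> simp only [actProb]
  · split_ifs with hab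
    · constructor <;> linarith
    · have hcard₂ : (2:ℝ) ≤ Fintype.card (A i) := by
        exact_mod_cast Fintype.one_lt_card_iff.2 ⟨ai, b, hab⟩
      exact ⟨div_nonneg h₀ (by linarith), div_le_one_of_le₀ (by linarith) (by linarith)⟩
  · exact ⟨by positivity, div_le_one_of_le₀ hcard (by linarith)⟩

lemma actProb_le_rpow (hε : 0 ≤ ε) {zi : AgentState (A i)} {ai : A i}
    (hzi : zi.mood = Mood.content) (hai : ai ≠ zi.act) : actProb c ε zi ai ≤ ε ^ c := by
  have hcard : (2:ℝ) ≤ Fintype.card (A i) := by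
    exact_mod_cast Fintype.one_lt_card_iff.2 ⟨ai, zi.act, hai⟩
  simp only [actProb, hzi, if_neg hai]
  exact div_le_self (Real.rpow_nonneg hε c) (by linarith)

lemma one_isBigO_actProb (hc : 0 < c) {zi : AgentState (A i)} {ai : A i}
    (h : zi.mood = Mood.content → ai = zi.act) :
    (fun _ => (1:ℝ)) =O[𝓝[>] 0] fun ε => actProb c ε zi ai := by
  rcases zi with ⟨b, u, _ | _⟩
  · simpa [actProb, h rfl] using one_isBigO_one_sub_rpow hc
  · have hcard : (0:ℝ) < Fintype.card (A i) := by exact_mod_cast Fintype.card_pos_iff.2 ⟨ai⟩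
    simpa [actProb] using isBigO_const_const (1:ℝ) (inv_pos.2 hcard).ne' (𝓝[>] (0:ℝ))

lemma rpow_isBigO_actProb {zi : AgentState (A i)} {ai : A i}
    (hzi : zi.mood = Mood.content) (hai : ai ≠ zi.act) :
    (fun ε : ℝ => ε ^ c) =O[𝓝[>] 0] fun ε => actProb c ε zi ai := by
  have hcard : (2:ℝ) ≤ Fintype.card (A i) := by
    exact_mod_cast Fintype.one_lt_card_iff.2 ⟨ai, zi.act, hai⟩
  simp only [actProb, hzi, if_neg hai, div_eq_inv_mul]
  exact (isBigO_refl _ _).const_mul_right (inv_ne_zero (by linarith))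

lemma isRegular_actProb (hc : 0 < c) (zi : AgentState (A i)) (ai : A i) :
    IsRegular fun ε => actProb c ε zi ai := by
  have hcard : (1:ℝ) ≤ Fintype.card (A i) := by
    exact_mod_cast Fintype.card_pos_iff.2 ⟨ai⟩
  rcases zi with ⟨b, u, _ | _⟩ <;> simp only [actProb]
  · split_ifs
    · exact .one_sub_rpow hc
    · simp_rw [div_eq_mul_inv]
      exact (IsRegular.rpow c).mul (.const (inv_nonneg.2 (by linarith)))
  · exact .const (by positivity)

end LearningDynamics

section Resistance

variable {n : ℕ} {A : Fin n → Type*} {W : Type*} [∀ i, Fintype (A i)]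
  {U : Fin n → (∀ j, A j) → W → ℝ} {Prw : W → ℝ} {c : ℝ}

lemma P_summand_nonneg (hc : 0 ≤ c) (hU : ∀ i a w, U i a w ≤ 1) (hPrw : ∀ w, 0 ≤ Prw w)
    {ε : ℝ} (hε : ε ∈ Set.Icc (0:ℝ) 1) (x y : JState A) (a : ∀ j, A j) (w : W) :
    0 ≤ (∏ i, actProb c ε (x i) (a i)) * Prw w *
      ∏ i, updProb (rho U) ε (x i) (y i) (a i) (U i a w) :=
  mul_nonneg (mul_nonneg (Finset.prod_nonneg fun _ _ => (actProb_mem_Icc hc hε _ _).1) (hPrw w))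
    (Finset.prod_nonneg fun i _ => (updProb_mem_Icc hε (hU i a w) _ _ _).1)

variable [Fintype W]

lemma P_summand_le_P (hc : 0 ≤ c) (hU : ∀ i a w, U i a w ≤ 1) (hPrw : ∀ w, 0 ≤ Prw w)
    {ε : ℝ} (hε : ε ∈ Set.Icc (0:ℝ) 1) (x y : JState A) (a : ∀ j, A j) (w : W) :
    (∏ i, actProb c ε (x i) (a i)) * Prw w *
      (∏ i, updProb (rho U) ε (x i) (y i) (a i) (U i a w)) ≤ P U Prw c ε x y :=
  (Finset.single_le_sum (fun w _ => P_summand_nonneg hc hU hPrw hε x y a w)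
    (Finset.mem_univ w)).trans
    (Finset.single_le_sum (fun a _ => Finset.sum_nonneg fun w _ =>
      P_summand_nonneg hc hU hPrw hε x y a w) (Finset.mem_univ a))

lemma P_nonneg (hc : 0 ≤ c) (hU : ∀ i a w, U i a w ≤ 1) (hPrw : ∀ w, 0 ≤ Prw w)
    {ε : ℝ} (hε : ε ∈ Set.Icc (0:ℝ) 1) (x y : JState A) : 0 ≤ P U Prw c ε x y :=
  Finset.sum_nonneg fun a _ => Finset.sum_nonneg fun w _ =>
    P_summand_nonneg hc hU hPrw hε x y a w

lemma P_le_of_forall_le (hPrw : ∀ w, 0 ≤ Prw w) {ε g : ℝ} {x y : JState A}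
    (hg : ∀ a w, (∏ i, actProb c ε (x i) (a i)) *
      (∏ i, updProb (rho U) ε (x i) (y i) (a i) (U i a w)) ≤ g) :
    P U Prw c ε x y ≤ Fintype.card (∀ j, A j) * (∑ w, Prw w) * g := by
  calc P U Prw c ε x y ≤ ∑ _a : ∀ j, A j, ∑ w, Prw w * g := by
        refine Finset.sum_le_sum fun a _ => Finset.sum_le_sum fun w _ => ?_
        rw [mul_right_comm, mul_comm]
        exact mul_le_mul_of_nonneg_left (hg a w) (hPrw w)
    _ = _ := by
        rw [← Finset.sum_mul, Finset.sum_const, Finset.card_univ, nsmul_eq_mul, mul_assoc]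

lemma P_isBigO (hc : 0 ≤ c) (hU : ∀ i a w, U i a w ≤ 1) (hPrw : ∀ w, 0 ≤ Prw w)
    {x y : JState A} {g : ℝ → ℝ}
    (hg : ∀ ε ∈ Set.Ioo (0:ℝ) 1, ∀ a w, (∏ i, actProb c ε (x i) (a i)) *
      (∏ i, updProb (rho U) ε (x i) (y i) (a i) (U i a w)) ≤ g ε) :
    (fun ε => P U Prw c ε x y) =O[𝓝[>] 0] g := by
  refine IsBigO.of_bound (Fintype.card (∀ j, A j) * ∑ w, Prw w) ?_
  filter_upwards [Ioo_mem_nhdsGT one_pos] with ε hε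
  rw [Real.norm_of_nonneg (P_nonneg hc hU hPrw (Set.Ioo_subset_Icc_self hε) x y)]
  exact (P_le_of_forall_le hPrw (hg ε hε)).trans (mul_le_mul_of_nonneg_left (Real.le_norm_self _)
    (mul_nonneg (Nat.cast_nonneg _) (Finset.sum_nonneg fun w _ => hPrw w)))

lemma P_isBigO_one (hc : 0 ≤ c) (hU : ∀ i a w, U i a w ≤ 1) (hPrw : ∀ w, 0 ≤ Prw w)
    (x y : JState A) : (fun ε => P U Prw c ε x y) =O[𝓝[>] 0] fun _ => (1:ℝ) := by
  refine P_isBigO hc hU hPrw fun ε hε a w => ?_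
  have hε := Set.Ioo_subset_Icc_self hε
  exact mul_le_one₀
    (Finset.prod_le_one (fun _ _ => (actProb_mem_Icc hc hε _ _).1)
      fun _ _ => (actProb_mem_Icc hc hε _ _).2)
    (Finset.prod_nonneg fun i _ => (updProb_mem_Icc hε (hU i a w) _ _ _).1)
    (Finset.prod_le_one (fun i _ => (updProb_mem_Icc hε (hU i a w) _ _ _).1)
      fun i _ => (updProb_mem_Icc hε (hU i a w) _ _ _).2)

lemma P_isBigO_rpow_of_settled (hc : 0 ≤ c) (hU : ∀ i a w, U i a w ≤ 1)
    (hPrw : ∀ w, 0 ≤ Prw w) {x y : JState A} (hx : ∀ i, Settled U x i) (hxy : y ≠ x) :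
    (fun ε => P U Prw c ε x y) =O[𝓝[>] 0] fun ε => ε ^ c := by
  refine P_isBigO hc hU hPrw fun ε hε a w => ?_
  have hε := Set.Ioo_subset_Icc_self hε
  have hact₀ : 0 ≤ ∏ i, actProb c ε (x i) (a i) :=
    Finset.prod_nonneg fun _ _ => (actProb_mem_Icc hc hε _ _).1
  by_cases ha : a = prof x
  · -- every agent keeps its state, so the transition must be the identity
    subst ha
    obtain ⟨i, hi⟩ := Function.ne_iff.1 hxy
    have hupd : updProb (rho U) ε (x i) (y i) (prof x i) (U i (prof x) w) = 0 := by
      simp [updProb, (hx i).1, (hx i).2 w, prof, hi]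
    rw [mul_eq_zero_of_right _ (Finset.prod_eq_zero (Finset.mem_univ i) hupd)]
    exact Real.rpow_nonneg hε.1 c
  · obtain ⟨i, hi⟩ := Function.ne_iff.1 ha
    calc (∏ i, actProb c ε (x i) (a i)) *
          (∏ i, updProb (rho U) ε (x i) (y i) (a i) (U i a w))
        ≤ actProb c ε (x i) (a i) * ∏ j ∈ Finset.univ.erase i, actProb c ε (x j) (a j) := by
          rw [Finset.mul_prod_erase Finset.univ (fun j => actProb c ε (x j) (a j))
            (Finset.mem_univ i)]
          exact mul_le_of_le_one_right hact₀ (Finset.prod_le_one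
            (fun i _ => (updProb_mem_Icc hε (hU i a w) _ _ _).1)
            fun i _ => (updProb_mem_Icc hε (hU i a w) _ _ _).2)
      _ ≤ ε ^ c * 1 := mul_le_mul (actProb_le_rpow hε.1 (hx i).1 hi)
          (Finset.prod_le_one (fun _ _ => (actProb_mem_Icc hc hε _ _).1)
            fun _ _ => (actProb_mem_Icc hc hε _ _).2)
          (Finset.prod_nonneg fun _ _ => (actProb_mem_Icc hc hε _ _).1)
          (Real.rpow_nonneg hε.1 c)
      _ = ε ^ c := mul_one _

lemma rpow_isBigO_P (hc : 0 ≤ c) (hU : ∀ i a w, U i a w ≤ 1) (hPrw : ∀ w, 0 ≤ Prw w)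
    (x y : JState A) (a : ∀ j, A j) {w : W} (hw : 0 < Prw w) {α β : Fin n → ℝ}
    (hα : ∀ i, (fun ε : ℝ => ε ^ α i) =O[𝓝[>] 0] fun ε => actProb c ε (x i) (a i))
    (hβ : ∀ i, (fun ε : ℝ => ε ^ β i) =O[𝓝[>] 0]
      fun ε => updProb (rho U) ε (x i) (y i) (a i) (U i a w)) :
    (fun ε : ℝ => ε ^ (∑ i, α i + ∑ i, β i)) =O[𝓝[>] 0] fun ε => P U Prw c ε x y := by
  have hsplit : (fun ε : ℝ => ε ^ (∑ i, α i + ∑ i, β i)) =ᶠ[𝓝[>] 0]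
      fun ε => (∏ i, ε ^ α i) * ∏ i, ε ^ β i := by
    filter_upwards [self_mem_nhdsWithin] with ε hε
    rw [Real.rpow_add hε, Real.rpow_sum_of_pos hε, Real.rpow_sum_of_pos hε]
  have hsummand : (fun ε => (∏ i, actProb c ε (x i) (a i)) *
      ∏ i, updProb (rho U) ε (x i) (y i) (a i) (U i a w)) =O[𝓝[>] 0]
      fun ε => P U Prw c ε x y := by
    refine IsBigO.of_bound (Prw w)⁻¹ ?_
    filter_upwards [Ioo_mem_nhdsGT one_pos] with ε hε
    have hε := Set.Ioo_subset_Icc_self hε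
    have h₀ := P_summand_nonneg hc hU hPrw hε x y a w
    rw [Real.norm_of_nonneg (P_nonneg hc hU hPrw hε x y), Real.norm_of_nonneg (by
      rw [mul_right_comm] at h₀; exact nonneg_of_mul_nonneg_left h₀ hw), inv_mul_eq_div,
      le_div_iff₀ hw, mul_right_comm]
    exact P_summand_le_P hc hU hPrw hε x y a w
  exact hsplit.trans_isBigO
    (((IsBigO.finsetProd fun i _ => hα i).mul (IsBigO.finsetProd fun i _ => hβ i)).trans
      hsummand)

lemma isRegular_P (hc : 0 < c) (hU : ∀ i a w, U i a w < 1) (hPrw : ∀ w, 0 ≤ Prw w)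
    (x y : JState A) : IsRegular fun ε => P U Prw c ε x y := by
  have hP : (fun ε => P U Prw c ε x y) = ∑ a : ∀ j, A j, ∑ w,
      (∏ i, fun ε => actProb c ε (x i) (a i)) * (fun _ => Prw w) *
        ∏ i, fun ε => updProb (rho U) ε (x i) (y i) (a i) (U i a w) := by
    ext ε
    simp [P, Finset.sum_apply, Finset.prod_apply]
  rw [hP]
  exact .sum _ fun a _ => .sum _ fun w _ =>
    ((IsRegular.prod _ fun i _ => isRegular_actProb hc _ _).mul (.const (hPrw w))).mul
      (IsRegular.prod _ fun i _ => isRegular_updProb (hU i a w) _ _ _)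

lemma exists_transRes_le (hc : 0 < c) (hU : ∀ i a w, U i a w < 1) (hPrw : ∀ w, 0 ≤ Prw w)
    {x y : JState A} {b : ℝ} (h : (fun ε : ℝ => ε ^ b) =O[𝓝[>] 0] fun ε => P U Prw c ε x y) :
    ∃ r ≤ b, TransRes U Prw c x y r :=
  (isRegular_P hc hU hPrw x y).exists_hasPowerOrder_le h

lemma TransRes.nonneg (hc : 0 ≤ c) (hU : ∀ i a w, U i a w ≤ 1) (hPrw : ∀ w, 0 ≤ Prw w)
    {x y : JState A} {r : ℝ} (h : TransRes U Prw c x y r) : 0 ≤ r :=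
  HasPowerOrder.le_of_isBigO h (by simpa using P_isBigO_one hc hU hPrw x y)

lemma TransRes.le_of_settled (hc : 0 ≤ c) (hU : ∀ i a w, U i a w ≤ 1)
    (hPrw : ∀ w, 0 ≤ Prw w) {x y : JState A} {r : ℝ} (h : TransRes U Prw c x y r)
    (hx : ∀ i, Settled U x i) (hxy : y ≠ x) : c ≤ r :=
  HasPowerOrder.le_of_isBigO h (P_isBigO_rpow_of_settled hc hU hPrw hx hxy)

lemma exists_transRes_experiment (hc : 0 < c) (hU : ∀ i a w, U i a w ∈ Set.Ico (0:ℝ) 1)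
    (hPrw : ∀ w, 0 < Prw w) {x : JState A} (hx : allContent x) {b : ∀ j, A j}
    (hb : ∀ i, b i ≠ (x i).act) (w : W) :
    ∃ r ≤ n * c, TransRes U Prw c x (fun i => ⟨b i, U i b w, Mood.discontent⟩) r := by
  have hβ (i : Fin n) : (fun ε : ℝ => ε ^ (0:ℝ)) =O[𝓝[>] 0] fun ε =>
      updProb (rho U) ε (x i) ⟨b i, U i b w, Mood.discontent⟩ (b i) (U i b w) := by
    have hmoves : ¬((x i).mood = Mood.content ∧ b i = (x i).act ∧
        |U i b w - (x i).util| ≤ rho U) := fun h => hb i h.2.1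
    simpa [updProb, hmoves] using one_isBigO_one_sub_rpow (sub_pos.2 (hU i b w).2)
  have h := rpow_isBigO_P hc.le (fun i a w => (hU i a w).2.le) (fun w => (hPrw w).le) x _ b
    (hPrw w) (fun i => rpow_isBigO_actProb (hx i) (hb i)) hβ
  simpa using exists_transRes_le hc (fun i a w => (hU i a w).2) (fun w => (hPrw w).le) h

lemma exists_transRes_accept (hc : 0 < c) (hU : ∀ i a w, U i a w ∈ Set.Ico (0:ℝ) 1)
    (hPrw : ∀ w, 0 < Prw w) {z x : JState A} {G : Finset (Fin n)} (hx : IsPartial z G x)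
    (hG : ∀ i ∈ G, Settled U z i) {j : Fin n} (hj : j ∉ G)
    (hzj : (z j).mood = Mood.content) {w : W} (hw : (z j).util = U j (prof z) w) :
    ∃ y, IsPartial z (insert j G) y ∧ ∃ r ≤ 1, TransRes U Prw c x y r := by
  set y : JState A := fun i =>
    if i ∈ insert j G then z i else ⟨prof z i, U i (prof z) w, Mood.discontent⟩
  refine ⟨y, ⟨fun i hi => if_pos hi, fun i hi => by simp only [y, if_neg hi]⟩, ?_⟩
  have hkeep := hx.keep_iff_mem hG w
  have hα (i : Fin n) : (fun ε : ℝ => ε ^ (0:ℝ)) =O[𝓝[>] 0]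
      fun ε => actProb c ε (x i) (prof z i) := by
    refine (one_isBigO_actProb hc fun h => ?_).congr_left fun ε => (Real.rpow_zero ε).symm
    by_cases hi : i ∈ G
    · rw [hx.1 i hi]; rfl
    · simp [hx.2 i hi] at h
  have hβ (i : Fin n) : (fun ε : ℝ => ε ^ (if i = j then 1 - U j (prof z) w else 0))
      =O[𝓝[>] 0] fun ε => updProb (rho U) ε (x i) (y i) (prof z i) (U i (prof z) w) := by
    by_cases hi : i ∈ G
    · have hij : i ≠ j := fun h => hj (h ▸ hi)
      have hyi : y i = x i := by rw [hx.1 i hi]; exact if_pos (Finset.mem_insert_of_mem hi)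
      simpa [updProb, (hkeep i).2 hi, hyi, hij] using isBigO_refl (fun _ : ℝ => (1:ℝ)) _
    · by_cases hij : i = j
      · subst hij
        have hyi : y i = ⟨prof z i, U i (prof z) w, Mood.content⟩ := by
          rw [← hw, ← hzj]; exact if_pos (Finset.mem_insert_self i G)
        simpa [updProb, (hkeep i).not.2 hi, hyi] using
          isBigO_refl (fun ε : ℝ => ε ^ (1 - U i (prof z) w)) _
      · have hyi : y i = ⟨prof z i, U i (prof z) w, Mood.discontent⟩ := by
          simp [y, hij, hi]
        simpa [updProb, (hkeep i).not.2 hi, hyi, hij] using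
          one_isBigO_one_sub_rpow (sub_pos.2 (hU i (prof z) w).2)
  have h := rpow_isBigO_P hc.le (fun i a w => (hU i a w).2.le) (fun w => (hPrw w).le) x y
    (prof z) (hPrw w) hα hβ
  obtain ⟨r, hr, hT⟩ := exists_transRes_le hc (fun i a w => (hU i a w).2) (fun w => (hPrw w).le) h
  refine ⟨r, ?_, hT⟩
  simp only [Finset.sum_const_zero, Finset.sum_ite_eq', Finset.mem_univ, if_true,
    zero_add] at hr
  linarith [(hU j (prof z) w).1]

lemma exists_pathRes_isPartial_union (hc : 0 < c) (hU : ∀ i a w, U i a w ∈ Set.Ico (0:ℝ) 1)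
    (hPrw : ∀ w, 0 < Prw w) {z s x : JState A} {r₀ : ℝ}
    (hp : PathRes (TransRes U Prw c) s x r₀) {G : Finset (Fin n)} (hx : IsPartial z G x)
    (hG : ∀ i ∈ G, Settled U z i) (S : Finset (Fin n))
    (hS : ∀ j ∈ S, Settled U z j ∧ ∃ w, (z j).util = U j (prof z) w) :
    ∃ y r, IsPartial z (G ∪ S) y ∧ r ≤ r₀ + S.card ∧ PathRes (TransRes U Prw c) s y r := by
  induction S using Finset.induction_on with
  | empty => exact ⟨x, r₀, by simpa using hx, by simp, hp⟩
  | @insert j S hjS ih =>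
    obtain ⟨y, r, hy, hr, hpy⟩ := ih fun i hi => hS i (Finset.mem_insert_of_mem hi)
    rw [Finset.card_insert_of_notMem hjS, Finset.union_insert]
    push_cast
    by_cases hj : j ∈ G ∪ S
    · exact ⟨y, r, by rwa [Finset.insert_eq_of_mem hj], by linarith, hpy⟩
    · obtain ⟨hjs, w, hw⟩ := hS j (Finset.mem_insert_self j S)
      have hGS (i : Fin n) (hi : i ∈ G ∪ S) : Settled U z i :=
        (Finset.mem_union.1 hi).elim (hG i) fun hi => (hS i (Finset.mem_insert_of_mem hi)).1
      obtain ⟨y', hy', r', hr', h⟩ := exists_transRes_accept hc hU hPrw hy hGS hj hjs.1 hw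
      exact ⟨y', r + r', hy', by linarith, hpy.snoc h⟩

lemma settled_and_attained_of_mem_Bset {z : JState A} (hz : allContent z) {i : Fin n}
    (h : z ∈ Bset U Prw c i) : Settled U z i ∧ ∃ w, (z i).util = U i (prof z) w :=
  ⟨⟨hz i, fun w => by rw [abs_sub_comm]; exact h.2.2 w⟩, h.2.1⟩

lemma settled_of_mem_Cm {m : ℕ} {z : JState A} (hz : z ∈ Cm U Prw c m) (i : Fin n) :
    Settled U z i := by
  cases m with
  | zero => exact (settled_and_attained_of_mem_Bset hz.2.1 (hz.2.2 i)).1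
  | succ k =>
    obtain ⟨-, hzc, J, -, -, -, hJ, z', -, hagree⟩ := hz
    by_cases hi : i ∈ J (Fin.last (k + 1))
    · exact (settled_and_attained_of_mem_Bset hzc (hJ i hi)).1
    · exact settled_of_eq_of_abs_sub_le hzc (hagree i hi)

lemma exists_pathRes_isPartial_of_mem_Cm (hc : 0 < c)
    (hU : ∀ i a w, U i a w ∈ Set.Ico (0:ℝ) 1) (hPrw : ∀ w, 0 < Prw w) :
    ∀ (m : ℕ) {z : JState A}, z ∈ Cm U Prw c m → ∀ {s x : JState A} {r₀ : ℝ},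
      PathRes (TransRes U Prw c) s x r₀ → allDiscontent x → ∀ T : Finset (Fin n),
      ∃ y r, IsPartial z T y ∧ r ≤ r₀ + T.card ∧ PathRes (TransRes U Prw c) s y r
  | 0, z, hz, s, x, r₀, hp, hx, T => by
    simpa using exists_pathRes_isPartial_union hc hU hPrw hp (G := ∅)
      ⟨by simp, fun i _ => hx i⟩ (by simp) T
      fun j _ => settled_and_attained_of_mem_Bset hz.2.1 (hz.2.2 j)
  | k + 1, z, hz, s, x, r₀, hp, hx, T => by
    obtain ⟨-, hzc, J, -, -, -, hJ, z', hz', hagree⟩ := hz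
    set L := J (Fin.last (k + 1))
    obtain ⟨y, r, hy, hr, hpy⟩ :=
      exists_pathRes_isPartial_of_mem_Cm hc hU hPrw k hz' hp hx (T \ L)
    have hyz : IsPartial z (T \ L) y :=
      ⟨fun i hi => (hy.1 i hi).trans (hagree i (Finset.mem_sdiff.1 hi).2).1.symm, hy.2⟩
    obtain ⟨y', r', hy', hr', hpy'⟩ := exists_pathRes_isPartial_union hc hU hPrw hpy hyz
      (fun i hi => settled_of_eq_of_abs_sub_le hzc (hagree i (Finset.mem_sdiff.1 hi).2))
      (T ∩ L) fun j hj => settled_and_attained_of_mem_Bset hzc (hJ j (Finset.mem_inter.1 hj).2)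
    have hcard : ((T \ L).card : ℝ) + (T ∩ L).card = T.card := by
      exact_mod_cast Finset.card_sdiff_add_card_inter T L
    exact ⟨y', r', by rwa [Finset.sdiff_union_inter] at hy', by linarith, hpy'⟩

end Resistance

lemma mul_add_le_resistance_bound {m n c : ℝ} (hm : 1 ≤ m) (hmn : m + 1 ≤ n) (hnc : n < c) :
    n * c + n ≤ m * c ^ 2 + ((4 + m - m ^ 2) / 2) * c - m * (m + 1) / 2 := by
  -- the bound minus `c ^ 2 + c` equals `(m - 1) c (c - (m + 1)) + m (m + 1) (c - 1) / 2`
  have h₁ : 0 ≤ (m - 1) * c * (c - (m + 1)) :=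
    mul_nonneg (mul_nonneg (by linarith) (by linarith)) (by linarith)
  have h₂ : 0 ≤ m * (m + 1) * (c - 1) := mul_nonneg (by nlinarith) (by linarith)
  nlinarith

theorem resistance_Cm_to_Cm_general {n : ℕ} {A : Fin n → Type*} {W : Type*}
    [∀ i, Fintype (A i)] [Fintype W] [Nonempty W]
    (U : ∀ i : Fin n, (∀ j, A j) → W → ℝ) (Prw : W → ℝ) (c : ℝ)
    (hU : ∀ (i : Fin n) (a : ∀ j, A j) (w : W), U i a w ∈ Set.Ico (0:ℝ) 1)
    (hPrw : ∀ w : W, 0 < Prw w)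
    (hc : (n : ℝ) < c)
    (hInter : Interdependent U) :
    ∀ m : ℕ, 0 < m → m < n →
      ∀ zm1 ∈ Cm U Prw c m, ∀ zm2 ∈ Cm U Prw c m, zm1 ≠ zm2 →
        ∀ r : ℝ, ClassResIs (TransRes U Prw c) {zm1} {zm2} r →
          c ≤ r ∧
          r ≤ (m : ℝ) * c ^ 2 + ((4 + (m : ℝ) - (m : ℝ) ^ 2) / 2) * c -
                (m : ℝ) * ((m : ℝ) + 1) / 2 := by
  intro m hm hmn zm1 hzm1 zm2 hzm2 hne r ⟨⟨x, hx, y, hy, hpath⟩, hmin⟩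
  subst x y
  have hc₀ : 0 < c := (Nat.cast_nonneg n).trans_lt hc
  have hU₁ : ∀ i a w, U i a w ≤ 1 := fun i a w => (hU i a w).2.le
  have hPrw₀ : ∀ w, 0 ≤ Prw w := fun w => (hPrw w).le
  have hsettled := settled_of_mem_Cm hzm1
  refine ⟨hpath.le_of_forall_exit_le (fun _ _ _ h => h.nonneg hc₀.le hU₁ hPrw₀)
    (fun _ _ h hy => h.le_of_settled hc₀.le hU₁ hPrw₀ hsettled hy) rfl hne.symm, ?_⟩
  obtain ⟨w⟩ := ‹Nonempty W›
  choose b hb using hInter.exists_ne hU (by omega) (prof zm1) w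
  obtain ⟨r₁, hr₁, h₁⟩ :=
    exists_transRes_experiment hc₀ hU hPrw (fun i => (hsettled i).1) hb w
  obtain ⟨z, r₂, hz, hr₂, h₂⟩ := exists_pathRes_isPartial_of_mem_Cm hc₀ hU hPrw m hzm2
    (.single h₁) (fun _ => rfl) Finset.univ
  rw [hz.eq_of_univ] at h₂
  calc r ≤ r₂ := hmin zm1 rfl zm2 rfl r₂ h₂
    _ ≤ n * c + n := by simp only [Finset.card_univ, Fintype.card_fin] at hr₂; linarith
    _ ≤ _ := mul_add_le_resistance_bound (by exact_mod_cast hm) (by exact_mod_cast hmn) hc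

/-- Table I, row 6: for `0 < m < n` and distinct `z^m₁, z^m₂ ∈ C^m`,
the resistance between `{z^m₁}` and `{z^m₂}` satisfies `c ≤ r ≤ r̄_m`, where
`r̄_m = m c² + ((4 + m − m²)/2) c − m(m+1)/2`. -/
theorem resistance_Cm_to_Cm {n : ℕ} {A : Fin n → Type*} {W : Type*}
    [∀ i, Fintype (A i)] [∀ i, Nonempty (A i)] [Fintype W] [Nonempty W]
    (U : ∀ i : Fin n, (∀ j, A j) → W → ℝ) (Prw : W → ℝ) (c : ℝ)
    (hn : 0 < n)
    (hU : ∀ (i : Fin n) (a : ∀ j, A j) (w : W), U i a w ∈ Set.Ico (0:ℝ) 1)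
    (hPrw : ∀ w : W, 0 < Prw w) (hPrw1 : (∑ w : W, Prw w) = 1)
    (hc : (n : ℝ) < c)
    (hInter : Interdependent U) :
    ∀ m : ℕ, 0 < m → m < n →
      ∀ zm1 ∈ Cm U Prw c m, ∀ zm2 ∈ Cm U Prw c m, zm1 ≠ zm2 →
        ∀ r : ℝ, ClassResIs (TransRes U Prw c) {zm1} {zm2} r →
          c ≤ r ∧
          r ≤ (m : ℝ) * c ^ 2 + ((4 + (m : ℝ) - (m : ℝ) ^ 2) / 2) * c -
                (m : ℝ) * ((m : ℝ) + 1) / 2 :=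
  resistance_Cm_to_Cm_general U Prw c hU hPrw hc hInter
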